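/- Let A be a unital C*-algebra and let (a_j)_{j∈ℕ} be a sequence whose range is dense in A. Let H and K be complex Hilbert spaces, let π : A → (H →L[ℂ] H) and ρ : A → (K →L[ℂ] K) be unital star-algebra homomorphisms that are both topologically irreducible, and let h ∈ H and k ∈ K be nonzero vectors such that ‖π(a_j)h‖ = ‖ρ(a_j)k‖ for every j ∈ ℕ. Then there exists a ℂ-linear isometric equivalence U : H ≃ K such that U(π(a)x) = ρ(a)(U x) for all a ∈ A and x ∈ H, i.e. π and ρ are unitarily equivalent. -/

import Mathlib

/-!
Irreducibility makes the orbits `φ(A) h` and `ψ(A) k` dense. Star homomorphisms of C⋆-algebras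
are contractive, so `b ↦ ‖φ b h‖` and `b ↦ ‖ψ b k‖` are continuous and agree on all of `A`, not
only on the dense sequence. Hence `φ b h ↦ ψ b k` is a well-defined isometry between dense
subspaces; it extends to a unitary `H ≃ K`, which intertwines `φ` and `ψ` on the dense orbit of
`h` and therefore everywhere.
-/

-- continuity of star algebra homomorphisms between C⋆-algebras
open scoped CStarAlgebra

namespace AlgHom

variable {𝕜 A H K : Type*} [CommRing 𝕜] [Ring A] [Algebra 𝕜 A]
  [AddCommGroup H] [Module 𝕜 H] [TopologicalSpace H] [IsTopologicalAddGroup H]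
  [ContinuousConstSMul 𝕜 H]
  [AddCommGroup K] [Module 𝕜 K] [TopologicalSpace K] [IsTopologicalAddGroup K]
  [ContinuousConstSMul 𝕜 K]

def IsTopologicallyIrreducible (φ : A →ₐ[𝕜] (H →L[𝕜] H)) : Prop :=
  ∀ S : Submodule 𝕜 H, IsClosed (S : Set H) → (∀ b : A, ∀ x ∈ S, φ b x ∈ S) → S = ⊥ ∨ S = ⊤

def orbitMap (φ : A →ₐ[𝕜] (H →L[𝕜] H)) (v : H) : A →ₗ[𝕜] H where
  toFun b := φ b v
  map_add' b c := by simp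
  map_smul' c b := by simp

@[simp]
theorem orbitMap_apply (φ : A →ₐ[𝕜] (H →L[𝕜] H)) (v : H) (b : A) : φ.orbitMap v b = φ b v :=
  rfl

theorem orbitMap_mul (φ : A →ₐ[𝕜] (H →L[𝕜] H)) (v : H) (b c : A) :
    φ.orbitMap v (b * c) = φ b (φ.orbitMap v c) := by
  simp

theorem denseRange_orbitMap {φ : A →ₐ[𝕜] (H →L[𝕜] H)}
    (hφ : φ.IsTopologicallyIrreducible) {v : H} (hv : v ≠ 0) : DenseRange (φ.orbitMap v) := by
  set S := (LinearMap.range (φ.orbitMap v)).topologicalClosure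
  have hS : (S : Set H) = closure (Set.range (φ.orbitMap v)) := by
    rw [Submodule.topologicalClosure_coe, LinearMap.coe_range]
  have hinv : ∀ b : A, ∀ x ∈ S, φ b x ∈ S := by
    intro b x hx
    rw [← SetLike.mem_coe, hS] at hx ⊢
    refine Set.MapsTo.closure ?_ (φ b).continuous hx
    rintro _ ⟨c, rfl⟩
    exact ⟨b * c, orbitMap_mul φ v b c⟩
  rcases hφ S (LinearMap.range _).isClosed_topologicalClosure hinv with hbot | htop
  · have hvS : v ∈ S := Submodule.le_topologicalClosure _ ⟨1, by simp⟩
    exact absurd ((Submodule.mem_bot 𝕜).1 (hbot ▸ hvS)) hv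
  · rw [DenseRange, dense_iff_closure_eq, ← hS, htop, Submodule.top_coe]

theorem intertwines_of_denseRange_orbitMap [T2Space K] (φ : A →ₐ[𝕜] (H →L[𝕜] H))
    (ψ : A →ₐ[𝕜] (K →L[𝕜] K)) {v : H} {w : K} (hv : DenseRange (φ.orbitMap v))
    {U : H → K} (hU : Continuous U) (hUv : ∀ c, U (φ c v) = ψ c w) (b : A) (x : H) :
    U (φ b x) = ψ b (U x) := by
  refine hv.induction_on x (isClosed_eq (by fun_prop) (by fun_prop)) fun c ↦ ?_
  rw [← orbitMap_mul, orbitMap_apply, orbitMap_apply, hUv, hUv, map_mul]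
  rfl

end AlgHom

/-- Two topologically irreducible representations of a unital C*-algebra with a dense
sequence `(a j)`, nonzero vectors `h`, `k`, and `‖φ (a j) h‖ = ‖ψ (a j) k‖` for all `j`,
are unitarily equivalent. -/
theorem decomposable_weak_expectations_stmt4
    {A H K : Type*}
    [NormedRing A] [StarRing A] [CStarRing A] [NormedAlgebra ℂ A]
    [CompleteSpace A] [StarModule ℂ A]
    [NormedAddCommGroup H] [InnerProductSpace ℂ H] [CompleteSpace H]
    [NormedAddCommGroup K] [InnerProductSpace ℂ K] [CompleteSpace K]
    (a : ℕ → A) (ha : DenseRange a)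
    (φ : A →⋆ₐ[ℂ] (H →L[ℂ] H)) (ψ : A →⋆ₐ[ℂ] (K →L[ℂ] K))
    (hφirr : ∀ S : Submodule ℂ H, IsClosed (S : Set H) →
      (∀ b : A, ∀ x ∈ S, φ b x ∈ S) → S = ⊥ ∨ S = ⊤)
    (hψirr : ∀ S : Submodule ℂ K, IsClosed (S : Set K) →
      (∀ b : A, ∀ x ∈ S, ψ b x ∈ S) → S = ⊥ ∨ S = ⊤)
    (h : H) (k : K) (hh : h ≠ 0) (hk : k ≠ 0)
    (heq : ∀ j : ℕ, ‖φ (a j) h‖ = ‖ψ (a j) k‖) :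
    ∃ U : H ≃ₗᵢ[ℂ] K, ∀ (b : A) (x : H), U (φ b x) = ψ b (U x) := by
  let _ : CStarAlgebra A := ⟨⟩
  have hφ : DenseRange (φ.toAlgHom.orbitMap h) := AlgHom.denseRange_orbitMap hφirr hh
  have hψ : DenseRange (ψ.toAlgHom.orbitMap k) := AlgHom.denseRange_orbitMap hψirr hk
  have hnorm : ∀ b, ‖ψ b k‖ = ‖φ b h‖ := congrFun <|
    ha.equalizer (g := fun b ↦ ‖ψ b k‖) (h := fun b ↦ ‖φ b h‖) (by fun_prop) (by fun_prop)
      (funext fun j ↦ (heq j).symm)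
  let U := (LinearEquiv.refl ℂ A).extendOfIsometry _ _ hφ hψ hnorm
  have hU : ∀ c, U (φ c h) = ψ c k := (LinearEquiv.refl ℂ A).extendOfIsometry_eq _ _ hφ hψ hnorm
  exact ⟨U, φ.toAlgHom.intertwines_of_denseRange_orbitMap ψ.toAlgHom hφ U.continuous hU⟩
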